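/- Let f: R → (0,1) be a strictly increasing C^1 function with f(t) → 0 as t → −∞ and f(t) → 1 as t → ∞. Then for every compact interval I ⊂ R and every ε > 0, there exist M ∈ N, weights w_i > 0 summing to 1, slopes a_i > 0, and offsets b_i ∈ R such that h(t) = ∑_{i=1}^M w_i σ(a_i t + b_i) satisfies max over t ∈ I of max(|f(t) − h(t)|, |f'(t) − h'(t)|) < ε. -/

import Mathlib

/-!
Sample `f` at the points `x_j = L + jΔ` of a fine grid reaching a little beyond `[s0, s1]`, pin
the samples to `0` at `j = 0` and to `1` at `j = N`, and use their increments `w_j` (positive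
because `f` is strictly increasing with values in `(0, 1)`, and telescoping to `1`) as the weights
of the steep sigmoids `σ(n (t - x_j))`.

Summation by parts turns the mixture into an average of the samples against the weights
`σ(n (t - x_j)) - σ(n (t - x_{j+1}))`, which are exponentially small away from `t`, so by uniform
continuity of `f` it is close to `f t`. Its derivative averages the difference quotients
`w_j / Δ = f' ξ_j` against `n Δ σ'(n (t - x_j))`, a Riemann sum of the probability density
`n σ'(n (t - ·))`, so by uniform continuity of `f'` it is close to `f' t`. With `N = n⁴` grid cells
both the Riemann-sum error and the tails tend to `0` as `n → ∞`.
-/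

open Filter Finset Real Topology

namespace Real

lemma sigmoid_le_exp (x : ℝ) : sigmoid x ≤ exp x := by
  rw [sigmoid_def, ← inv_inv (exp x), ← exp_neg]
  exact inv_anti₀ (exp_pos _) (by linarith)

lemma one_sub_sigmoid_le_exp_neg (x : ℝ) : 1 - sigmoid x ≤ exp (-x) := by
  rw [← sigmoid_neg]
  exact sigmoid_le_exp _

lemma deriv_sigmoid_nonneg (x : ℝ) : 0 ≤ deriv sigmoid x := by
  rw [deriv_sigmoid]
  exact mul_nonneg (sigmoid_nonneg x) (by linarith [sigmoid_lt_one x])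

lemma deriv_sigmoid_le_exp_neg_abs (x : ℝ) : deriv sigmoid x ≤ exp (-|x|) := by
  have h0 := sigmoid_pos x
  have h1 := sigmoid_lt_one x
  rw [deriv_sigmoid]
  rcases abs_cases x with ⟨hx, -⟩ | ⟨hx, -⟩
  · rw [hx]
    nlinarith [one_sub_sigmoid_le_exp_neg x]
  · rw [hx, neg_neg]
    nlinarith [sigmoid_le_exp x]

lemma abs_sigmoid_sub_le (a b : ℝ) : |sigmoid a - sigmoid b| ≤ |a - b| := by
  have h := convex_univ.norm_image_sub_le_of_norm_deriv_le (C := 1)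
    (fun x _ => differentiableAt_sigmoid) (fun x _ => ?_) (Set.mem_univ b) (Set.mem_univ a)
  · simpa only [Real.norm_eq_abs, one_mul] using h
  rw [Real.norm_eq_abs, abs_of_nonneg (deriv_sigmoid_nonneg x), deriv_sigmoid]
  nlinarith [sigmoid_pos x, sigmoid_lt_one x]

lemma abs_deriv_sigmoid_sub_le (a b : ℝ) :
    |deriv sigmoid a - deriv sigmoid b| ≤ |a - b| := by
  have hfac : deriv sigmoid a - deriv sigmoid b
      = (sigmoid a - sigmoid b) * (1 - sigmoid a - sigmoid b) := by
    rw [deriv_sigmoid]; ring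
  have hsum : |1 - sigmoid a - sigmoid b| ≤ 1 := by
    rw [abs_le]
    constructor <;> linarith [sigmoid_pos a, sigmoid_pos b, sigmoid_lt_one a, sigmoid_lt_one b]
  rw [hfac, abs_mul]
  calc |sigmoid a - sigmoid b| * |1 - sigmoid a - sigmoid b| ≤ |a - b| * 1 :=
        mul_le_mul (abs_sigmoid_sub_le a b) hsum (abs_nonneg _) (abs_nonneg _)
    _ = |a - b| := mul_one _

end Real

lemma abs_sub_sub_mul_deriv_le {φ φ' : ℝ → ℝ} {K : ℝ} (hφ : ∀ x, HasDerivAt φ (φ' x) x)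
    (hφ' : ∀ x y, |φ' x - φ' y| ≤ K * |x - y|) (u : ℝ) {d : ℝ} (hd : 0 ≤ d) :
    |φ u - φ (u - d) - d * φ' u| ≤ K * d ^ 2 := by
  have hK : 0 ≤ K := by simpa using (abs_nonneg _).trans (hφ' (u + 1) u)
  have h := (convex_Icc (u - d) u).norm_image_sub_le_of_norm_hasDerivWithin_le
    (f := fun x => φ x - x * φ' u) (f' := fun x => φ' x - φ' u) (C := K * d)
    (fun x _ => ((hφ x).sub ((hasDerivAt_id x).mul_const (φ' u))).hasDerivWithinAt.congr_deriv
      (by simp)) (fun x hx => ?_) (Set.left_mem_Icc.2 (by linarith))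
    (Set.right_mem_Icc.2 (by linarith))
  · simp only [Real.norm_eq_abs] at h
    rw [sub_sub_cancel, abs_of_nonneg hd] at h
    rw [sq, ← mul_assoc]
    convert h using 2
    ring
  rw [Real.norm_eq_abs]
  refine (hφ' x u).trans (mul_le_mul_of_nonneg_left ?_ hK)
  rw [abs_le]
  constructor <;> linarith [hx.1, hx.2]

lemma abs_sum_mul_sub_mul_sum_le {ι : Type*} (s : Finset ι) (p g : ι → ℝ) {y e η : ℝ}
    (he : 0 ≤ e) (hη : 0 ≤ η) (hp : ∀ i ∈ s, 0 ≤ p i)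
    (h : ∀ i ∈ s, |g i - y| ≤ e ∨ p i * |g i - y| ≤ η) :
    |∑ i ∈ s, p i * g i - y * ∑ i ∈ s, p i| ≤ e * ∑ i ∈ s, p i + s.card * η := by
  have hterm : ∀ i ∈ s, |p i * (g i - y)| ≤ e * p i + η := by
    intro i hi
    rw [abs_mul, abs_of_nonneg (hp i hi)]
    rcases h i hi with hg | hg <;> nlinarith [hp i hi]
  calc |∑ i ∈ s, p i * g i - y * ∑ i ∈ s, p i| = |∑ i ∈ s, p i * (g i - y)| := by
        rw [mul_sum, ← sum_sub_distrib]
        exact congrArg _ (sum_congr rfl fun i _ => by ring)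
    _ ≤ ∑ i ∈ s, (e * p i + η) := (abs_sum_le_sum_abs _ _).trans (sum_le_sum hterm)
    _ = e * ∑ i ∈ s, p i + s.card * η := by
        rw [sum_add_distrib, mul_sum, sum_const, nsmul_eq_mul]

lemma sum_range_sub_mul_by_parts {R : Type*} [CommRing R] (F G : ℕ → R) (N : ℕ) :
    ∑ j ∈ range N, (F (j + 1) - F j) * G j
      = ∑ j ∈ range N, F (j + 1) * (G j - G (j + 1)) + (F N * G N - F 0 * G 0) := by
  rw [← sum_range_sub (fun j => F j * G j), ← sum_add_distrib]
  exact sum_congr rfl fun j _ => by ring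

lemma sigmoid_mul_sub_le_exp {n t x d : ℝ} (hn : 0 ≤ n) (h : t + d ≤ x) :
    sigmoid (n * (t - x)) ≤ exp (-(n * d)) :=
  (sigmoid_le_exp _).trans (exp_le_exp.2 (by nlinarith))

lemma one_sub_sigmoid_mul_sub_le_exp {n t x d : ℝ} (hn : 0 ≤ n) (h : x + d ≤ t) :
    1 - sigmoid (n * (t - x)) ≤ exp (-(n * d)) :=
  (one_sub_sigmoid_le_exp_neg _).trans (exp_le_exp.2 (by nlinarith))

lemma deriv_sigmoid_mul_sub_le_exp {n t x d : ℝ} (hn : 0 ≤ n) (h : d ≤ |t - x|) :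
    deriv sigmoid (n * (t - x)) ≤ exp (-(n * d)) := by
  refine (deriv_sigmoid_le_exp_neg_abs _).trans (exp_le_exp.2 ?_)
  rw [abs_mul, abs_of_nonneg hn, neg_le_neg_iff]
  exact mul_le_mul_of_nonneg_left h hn

lemma lt_of_add_mul_lt_add_mul {L Δ : ℝ} {j k : ℕ} (hΔ : 0 ≤ Δ)
    (h : L + j * Δ < L + k * Δ) : j < k := by
  have h' : (j : ℝ) * Δ < k * Δ := by linarith
  exact_mod_cast lt_of_mul_lt_mul_right h' hΔ

section Grid

variable (f : ℝ → ℝ) (L Δ : ℝ) (N : ℕ)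

noncomputable def gridCDF (j : ℕ) : ℝ :=
  if j = 0 then 0 else if j < N then f (L + j * Δ) else 1

noncomputable def gridWeight (j : ℕ) : ℝ := gridCDF f L Δ N (j + 1) - gridCDF f L Δ N j

noncomputable def sigmoidStaircase (n u : ℝ) : ℝ :=
  ∑ j ∈ range N, gridWeight f L Δ N j * sigmoid (n * (u - (L + j * Δ)))

variable {f L Δ N}

lemma gridCDF_zero : gridCDF f L Δ N 0 = 0 := if_pos rfl

lemma gridCDF_of_pos_of_lt {j : ℕ} (h0 : 0 < j) (hj : j < N) :
    gridCDF f L Δ N j = f (L + j * Δ) := by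
  rw [gridCDF, if_neg h0.ne', if_pos hj]

lemma gridCDF_of_le {j : ℕ} (h0 : 0 < j) (hj : N ≤ j) : gridCDF f L Δ N j = 1 := by
  rw [gridCDF, if_neg h0.ne', if_neg hj.not_gt]

lemma gridCDF_mem_Icc (hf : ∀ x, f x ∈ Set.Icc 0 1) (j : ℕ) :
    gridCDF f L Δ N j ∈ Set.Icc 0 1 := by
  unfold gridCDF
  split_ifs
  exacts [⟨le_rfl, zero_le_one⟩, hf _, ⟨zero_le_one, le_rfl⟩]

lemma sum_gridWeight (hN : 0 < N) : ∑ j ∈ range N, gridWeight f L Δ N j = 1 := by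
  simp only [gridWeight]
  rw [sum_range_sub, gridCDF_of_le hN le_rfl, gridCDF_zero, sub_zero]

lemma gridWeight_pos (hf : StrictMono f) (h01 : ∀ x, f x ∈ Set.Ioo 0 1) (hΔ : 0 < Δ) {j : ℕ}
    (hj : j < N) : 0 < gridWeight f L Δ N j := by
  rw [gridWeight, sub_pos]
  rcases Nat.eq_zero_or_pos j with rfl | hj0
  · rw [zero_add]
    rcases (Nat.succ_le_of_lt hj).lt_or_eq with h1 | h1
    · rw [gridCDF_of_pos_of_lt one_pos h1, gridCDF_zero]
      exact (h01 _).1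
    · rw [gridCDF_of_le one_pos h1.ge, gridCDF_zero]
      exact one_pos
  rw [gridCDF_of_pos_of_lt hj0 hj]
  rcases (Nat.succ_le_of_lt hj).lt_or_eq with h1 | h1
  · rw [gridCDF_of_pos_of_lt j.succ_pos h1]
    exact hf (by push_cast; nlinarith)
  · rw [gridCDF_of_le j.succ_pos h1.ge]
    exact (h01 _).2

lemma abs_gridWeight_le_one (hf : ∀ x, f x ∈ Set.Icc 0 1) (j : ℕ) :
    |gridWeight f L Δ N j| ≤ 1 := by
  have h1 := gridCDF_mem_Icc (L := L) (Δ := Δ) (N := N) hf (j + 1)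
  have h2 := gridCDF_mem_Icc (L := L) (Δ := Δ) (N := N) hf j
  rw [gridWeight, abs_le]
  constructor <;> linarith [h1.1, h1.2, h2.1, h2.2]

lemma hasDerivAt_sigmoidStaircase (n u : ℝ) :
    HasDerivAt (sigmoidStaircase f L Δ N n)
      (∑ j ∈ range N, gridWeight f L Δ N j * (n * deriv sigmoid (n * (u - (L + j * Δ))))) u := by
  unfold sigmoidStaircase
  refine HasDerivAt.fun_sum fun j _ => HasDerivAt.const_mul _ ?_
  have h := (differentiableAt_sigmoid (x := n * (u - (L + j * Δ)))).hasDerivAt.comp u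
    (((hasDerivAt_id u).sub_const (L + j * Δ)).const_mul n)
  exact h.congr_deriv (by ring)

lemma sigmoidStaircase_eq_sum_fin (n u : ℝ) :
    sigmoidStaircase f L Δ N n u
      = ∑ i : Fin N,
          gridWeight f L Δ N i * (1 + exp (-(n * u + -(n * (L + (i : ℕ) * Δ)))))⁻¹ := by
  rw [sigmoidStaircase, ← Fin.sum_univ_eq_sum_range]
  congr 1
  funext i
  rw [← sigmoid_def]
  ring_nf

end Grid

/-- `N (n Δ)²` bounds the Riemann-sum error for `∫ n σ'(n (t - x)) dx = 1` on the grid, and the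
second term the tails of `σ` and `σ'` at distance `r / 2` from `t`. -/
noncomputable def gridError (N : ℕ) (Δ n r : ℝ) : ℝ :=
  N * (n * Δ) ^ 2 + (N + 2) * n * exp (-(n * (r / 2)))

lemma natCast_mul_mul_exp_le_gridError {N : ℕ} {Δ n r : ℝ} (hn : 0 ≤ n) :
    N * (n * exp (-(n * (r / 2)))) ≤ gridError N Δ n r := by
  rw [gridError]
  nlinarith [mul_nonneg (N.cast_nonneg : (0 : ℝ) ≤ N) (sq_nonneg (n * Δ)),
    mul_nonneg hn (exp_pos (-(n * (r / 2)))).le]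

section Estimates

variable {f : ℝ → ℝ} {L Δ : ℝ} {N : ℕ} {n t r : ℝ}

lemma sigmoid_grid_succ_le (hn : 0 ≤ n) (hΔ : 0 ≤ Δ) (j : ℕ) :
    sigmoid (n * (t - (L + (j + 1 : ℕ) * Δ))) ≤ sigmoid (n * (t - (L + j * Δ))) :=
  sigmoid_le (mul_le_mul_of_nonneg_left (by push_cast; linarith) hn)

lemma sigmoid_grid_sub_succ_le_of_far (hn : 0 ≤ n) (hΔ : 0 ≤ Δ) (hΔr : Δ ≤ r / 2) {j : ℕ}
    (hfar : r < |L + (j + 1 : ℕ) * Δ - t|) :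
    sigmoid (n * (t - (L + j * Δ))) - sigmoid (n * (t - (L + (j + 1 : ℕ) * Δ)))
      ≤ exp (-(n * (r / 2))) := by
  push_cast at hfar ⊢
  rcases lt_abs.1 hfar with hright | hleft
  · have h := sigmoid_mul_sub_le_exp (t := t) (x := L + j * Δ) (d := r / 2) hn (by linarith)
    linarith [sigmoid_pos (n * (t - (L + (j + 1) * Δ)))]
  · have h := one_sub_sigmoid_mul_sub_le_exp (t := t) (x := L + (j + 1) * Δ) (d := r / 2) hn
      (by linarith)
    linarith [sigmoid_lt_one (n * (t - (L + j * Δ)))]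

lemma abs_sum_deriv_sigmoid_grid_sub_one_le (hn : 1 ≤ n) (hΔ : 0 ≤ Δ) (hL : L + r / 2 ≤ t)
    (hR : t + r / 2 ≤ L + N * Δ) :
    |∑ j ∈ range N, n * Δ * deriv sigmoid (n * (t - (L + j * Δ))) - 1| ≤ gridError N Δ n r := by
  have hn₀ : 0 ≤ n := by linarith
  set G : ℕ → ℝ := fun j => sigmoid (n * (t - (L + j * Δ)))
  have hstep : ∀ j ∈ range N,
      |n * Δ * deriv sigmoid (n * (t - (L + j * Δ))) - (G j - G (j + 1))| ≤ (n * Δ) ^ 2 := by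
    intro j _
    have h := abs_sub_sub_mul_deriv_le (K := 1) (fun x => differentiableAt_sigmoid.hasDerivAt)
      (fun a b => (abs_deriv_sigmoid_sub_le a b).trans_eq (one_mul _).symm)
      (n * (t - (L + j * Δ))) (mul_nonneg hn₀ hΔ)
    rw [one_mul, show n * (t - (L + j * Δ)) - n * Δ = n * (t - (L + (j + 1 : ℕ) * Δ)) by
      push_cast; ring] at h
    rw [abs_sub_comm]
    exact h
  have h0 : 1 - G 0 ≤ exp (-(n * (r / 2))) :=
    one_sub_sigmoid_mul_sub_le_exp hn₀ (by simpa using hL)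
  have hN : G N ≤ exp (-(n * (r / 2))) := sigmoid_mul_sub_le_exp hn₀ hR
  have hG0 : G 0 ≤ 1 := sigmoid_le_one _
  have hGN : 0 ≤ G N := sigmoid_nonneg _
  have hsplit : ∑ j ∈ range N, n * Δ * deriv sigmoid (n * (t - (L + j * Δ))) - 1
      = ∑ j ∈ range N, (n * Δ * deriv sigmoid (n * (t - (L + j * Δ))) - (G j - G (j + 1)))
        - ((1 - G 0) + G N) := by
    rw [sum_sub_distrib, sum_range_sub']
    ring
  have hsum := (abs_sum_le_sum_abs _ _).trans (sum_le_sum hstep)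
  rw [sum_const, card_range, nsmul_eq_mul] at hsum
  rw [hsplit]
  refine (abs_sub _ _).trans ?_
  have hE : exp (-(n * (r / 2))) ≤ n * exp (-(n * (r / 2))) :=
    le_mul_of_one_le_left (exp_pos _).le hn
  rw [abs_of_nonneg (by linarith : 0 ≤ (1 - G 0) + G N), gridError]
  nlinarith [mul_nonneg (N.cast_nonneg : (0 : ℝ) ≤ N)
    (mul_nonneg hn₀ (exp_pos (-(n * (r / 2)))).le)]

lemma sigmoidStaircase_eq_sum_by_parts (hN : 0 < N) :
    sigmoidStaircase f L Δ N n t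
      = ∑ j ∈ range N,
          (sigmoid (n * (t - (L + j * Δ))) - sigmoid (n * (t - (L + (j + 1 : ℕ) * Δ))))
            * gridCDF f L Δ N (j + 1)
        + sigmoid (n * (t - (L + N * Δ))) := by
  rw [sigmoidStaircase]
  simp only [gridWeight]
  rw [sum_range_sub_mul_by_parts, gridCDF_zero, gridCDF_of_le hN le_rfl]
  simp only [mul_comm (sigmoid _ - _)]
  ring

lemma abs_gridCDF_sub_le_or_sigmoid_grid_sub_succ_mul_le (hf : ∀ x, f x ∈ Set.Icc 0 1)
    (hn : 0 ≤ n) (hΔ : 0 ≤ Δ) (hΔr : Δ ≤ r / 2) (hR : t + r < L + N * Δ) {e : ℝ}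
    (hmod : ∀ x, |x - t| ≤ r → |f x - f t| ≤ e) (j : ℕ) :
    |gridCDF f L Δ N (j + 1) - f t| ≤ e ∨
      (sigmoid (n * (t - (L + j * Δ))) - sigmoid (n * (t - (L + (j + 1 : ℕ) * Δ))))
        * |gridCDF f L Δ N (j + 1) - f t| ≤ exp (-(n * (r / 2))) := by
  by_cases hnear : |L + (j + 1 : ℕ) * Δ - t| ≤ r
  · have hj : j + 1 < N := lt_of_add_mul_lt_add_mul hΔ (by linarith [(abs_le.1 hnear).2])
    rw [gridCDF_of_pos_of_lt j.succ_pos hj]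
    exact Or.inl (hmod _ hnear)
  · have hF := gridCDF_mem_Icc (L := L) (Δ := Δ) (N := N) hf (j + 1)
    have hft := hf t
    have hfar := sigmoid_grid_sub_succ_le_of_far (n := n) (t := t) hn hΔ hΔr (not_le.1 hnear)
    have hp := sigmoid_grid_succ_le (n := n) (t := t) (L := L) hn hΔ j
    have habs : |gridCDF f L Δ N (j + 1) - f t| ≤ 1 :=
      abs_le.2 ⟨by linarith [hF.1, hft.2], by linarith [hF.2, hft.1]⟩
    exact Or.inr (by nlinarith)

theorem abs_sub_sigmoidStaircase_le (hf : ∀ x, f x ∈ Set.Icc 0 1) (hn : 1 ≤ n) (hΔ : 0 < Δ)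
    (hΔr : Δ ≤ r / 2) (hL : L + r < t) (hR : t + r < L + N * Δ) {e : ℝ} (he : 0 ≤ e)
    (hmod : ∀ x, |x - t| ≤ r → |f x - f t| ≤ e) :
    |f t - sigmoidStaircase f L Δ N n t| ≤ e + gridError N Δ n r := by
  set G : ℕ → ℝ := fun j => sigmoid (n * (t - (L + j * Δ)))
  set F := gridCDF f L Δ N
  have hN : 0 < N := lt_of_add_mul_lt_add_mul (L := L) hΔ.le (by simp; linarith)
  have hconc := abs_sum_mul_sub_mul_sum_le (range N) (fun j => G j - G (j + 1))
    (fun j => F (j + 1)) (y := f t) he (exp_pos (-(n * (r / 2)))).le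
    (fun j _ => sub_nonneg.2 (sigmoid_grid_succ_le (by linarith) hΔ.le j))
    fun j _ => abs_gridCDF_sub_le_or_sigmoid_grid_sub_succ_mul_le hf (by linarith) hΔ.le hΔr hR
      hmod j
  rw [sum_range_sub', card_range, abs_le] at hconc
  have h0 : 1 - G 0 ≤ exp (-(n * (r / 2))) :=
    one_sub_sigmoid_mul_sub_le_exp (by linarith) (by simp; linarith)
  have hN' : G N ≤ exp (-(n * (r / 2))) := sigmoid_mul_sub_le_exp (by linarith) (by linarith)
  have hG0 : G 0 ≤ 1 := sigmoid_le_one _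
  have hGN : 0 ≤ G N := sigmoid_nonneg _
  have hft := hf t
  have hfirst : 0 ≤ f t * (1 - G 0) ∧ f t * (1 - G 0) ≤ 1 - G 0 :=
    ⟨mul_nonneg hft.1 (by linarith), mul_le_of_le_one_left (by linarith) hft.2⟩
  have hlast : 0 ≤ (1 - f t) * G N ∧ (1 - f t) * G N ≤ G N :=
    ⟨mul_nonneg (by linarith [hft.2]) hGN, mul_le_of_le_one_left hGN (by linarith [hft.1])⟩
  have hexp : (N + 2) * exp (-(n * (r / 2))) ≤ gridError N Δ n r := by
    have h1 : exp (-(n * (r / 2))) ≤ n * exp (-(n * (r / 2))) :=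
      le_mul_of_one_le_left (exp_pos _).le hn
    rw [gridError, mul_assoc]
    nlinarith [sq_nonneg (n * Δ), (N.cast_nonneg : (0 : ℝ) ≤ N)]
  have he' : e * (G 0 - G N) ≤ e := mul_le_of_le_one_right he (by linarith)
  have hsplit : f t - (∑ j ∈ range N, (G j - G (j + 1)) * F (j + 1) + G N)
      = -(∑ j ∈ range N, (G j - G (j + 1)) * F (j + 1) - f t * (G 0 - G N))
        + f t * (1 - G 0) - (1 - f t) * G N := by
    ring
  rw [sigmoidStaircase_eq_sum_by_parts hN, hsplit, abs_le]
  constructor <;> linarith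

lemma abs_gridWeight_div_sub_deriv_le (hf : Differentiable ℝ f) (hΔ : 0 < Δ) (hΔr : Δ ≤ r / 2)
    (hL : L + r < t) (hR : t + r < L + N * Δ) {e : ℝ}
    (hmod : ∀ x, |x - t| ≤ r → |deriv f x - deriv f t| ≤ e) {j : ℕ}
    (hnear : |L + j * Δ - t| ≤ r / 2) :
    |gridWeight f L Δ N j / Δ - deriv f t| ≤ e := by
  obtain ⟨hnear₁, hnear₂⟩ := abs_le.1 hnear
  have hj0 : 0 < j := lt_of_add_mul_lt_add_mul (L := L) hΔ.le (by simp; linarith)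
  have hj1 : j + 1 < N := lt_of_add_mul_lt_add_mul (L := L) hΔ.le (by push_cast; linarith)
  obtain ⟨ξ, hξ, hslope⟩ := exists_deriv_eq_slope f (by linarith : L + j * Δ < L + (j + 1) * Δ)
    hf.continuous.continuousOn fun x _ => (hf x).differentiableWithinAt
  have hweight : gridWeight f L Δ N j / Δ = deriv f ξ := by
    rw [gridWeight, gridCDF_of_pos_of_lt j.succ_pos hj1, gridCDF_of_pos_of_lt hj0 (by omega),
      hslope]
    push_cast
    congr 1
    ring
  rw [hweight]
  exact hmod ξ (abs_le.2 ⟨by linarith [hξ.1], by linarith [hξ.2]⟩)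

lemma deriv_sigmoid_grid_mul_abs_gridWeight_div_sub_le (hf : ∀ x, f x ∈ Set.Icc 0 1)
    (hn : 0 ≤ n) (hΔ : 0 < Δ) (hΔ1 : Δ ≤ 1) {y B : ℝ} (hB : |y| ≤ B) {j : ℕ}
    (hfar : r / 2 < |L + j * Δ - t|) :
    n * Δ * deriv sigmoid (n * (t - (L + j * Δ))) * |gridWeight f L Δ N j / Δ - y|
      ≤ n * (1 + B) * exp (-(n * (r / 2))) := by
  have hdecay := deriv_sigmoid_mul_sub_le_exp (n := n) (t := t) (x := L + j * Δ) (d := r / 2) hn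
    (by rw [abs_sub_comm]; exact hfar.le)
  have hw := abs_gridWeight_le_one (L := L) (Δ := Δ) (N := N) hf j
  have hdiff : |gridWeight f L Δ N j - Δ * y| ≤ 1 + B := by
    refine (abs_sub _ _).trans ?_
    rw [abs_mul, abs_of_pos hΔ]
    nlinarith [abs_nonneg y]
  calc n * Δ * deriv sigmoid (n * (t - (L + j * Δ))) * |gridWeight f L Δ N j / Δ - y|
      = n * deriv sigmoid (n * (t - (L + j * Δ))) * |gridWeight f L Δ N j - Δ * y| := by
        rw [show gridWeight f L Δ N j / Δ - y = (gridWeight f L Δ N j - Δ * y) / Δ by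
          field_simp, abs_div, abs_of_pos hΔ]
        field_simp
    _ ≤ n * exp (-(n * (r / 2))) * (1 + B) :=
        mul_le_mul (mul_le_mul_of_nonneg_left hdecay hn) hdiff (abs_nonneg _) (by positivity)
    _ = n * (1 + B) * exp (-(n * (r / 2))) := by ring

theorem abs_deriv_sub_deriv_sigmoidStaircase_le (hf : Differentiable ℝ f)
    (hf01 : ∀ x, f x ∈ Set.Icc 0 1) (hn : 1 ≤ n) (hΔ : 0 < Δ) (hΔr : Δ ≤ r / 2) (hr : r ≤ 2)
    (hL : L + r < t) (hR : t + r < L + N * Δ) {e B : ℝ} (he : 0 ≤ e) (hB : |deriv f t| ≤ B)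
    (hmod : ∀ x, |x - t| ≤ r → |deriv f x - deriv f t| ≤ e) :
    |deriv f t
        - ∑ j ∈ range N, gridWeight f L Δ N j * (n * deriv sigmoid (n * (t - (L + j * Δ))))|
      ≤ e + (e + 2 * B + 1) * gridError N Δ n r := by
  set q : ℕ → ℝ := fun j => n * Δ * deriv sigmoid (n * (t - (L + j * Δ))) with hq
  set g : ℕ → ℝ := fun j => gridWeight f L Δ N j / Δ with hg
  set τ := gridError N Δ n r
  set E := exp (-(n * (r / 2)))
  have hB0 : 0 ≤ B := (abs_nonneg _).trans hB
  have hsum : ∑ j ∈ range N, gridWeight f L Δ N j * (n * deriv sigmoid (n * (t - (L + j * Δ))))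
      = ∑ j ∈ range N, q j * g j :=
    sum_congr rfl fun j _ => by simp only [hq, hg]; field_simp
  have hconc := abs_sum_mul_sub_mul_sum_le (range N) q g (y := deriv f t) he
    (η := n * (1 + B) * E) (by positivity)
    (fun j _ => mul_nonneg (by positivity) (deriv_sigmoid_nonneg _)) fun j _ =>
      (le_or_gt |L + j * Δ - t| (r / 2)).imp
        (abs_gridWeight_div_sub_deriv_le hf hΔ hΔr hL hR hmod)
        (deriv_sigmoid_grid_mul_abs_gridWeight_div_sub_le hf01 (by linarith) hΔ (by linarith) hB)
  rw [card_range] at hconc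
  have hmass : |∑ j ∈ range N, q j - 1| ≤ τ :=
    abs_sum_deriv_sigmoid_grid_sub_one_le hn hΔ.le (by linarith) (by linarith)
  have hmass₁ : e * ∑ j ∈ range N, q j ≤ e * (1 + τ) :=
    mul_le_mul_of_nonneg_left (by linarith [(abs_le.1 hmass).2]) he
  have hfar : (N : ℝ) * (n * (1 + B) * E) ≤ (1 + B) * τ := by
    rw [show (N : ℝ) * (n * (1 + B) * E) = (1 + B) * (N * (n * E)) by ring]
    exact mul_le_mul_of_nonneg_left (natCast_mul_mul_exp_le_gridError (by linarith))
      (by linarith)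
  rw [hsum]
  calc |deriv f t - ∑ j ∈ range N, q j * g j|
      = |deriv f t * (1 - ∑ j ∈ range N, q j)
          - (∑ j ∈ range N, q j * g j - deriv f t * ∑ j ∈ range N, q j)| := by
        ring_nf
    _ ≤ |deriv f t| * |∑ j ∈ range N, q j - 1|
          + |∑ j ∈ range N, q j * g j - deriv f t * ∑ j ∈ range N, q j| := by
        rw [← abs_sub_comm 1, ← abs_mul]
        exact abs_sub _ _
    _ ≤ B * τ + (e * (1 + τ) + (1 + B) * τ) :=
        add_le_add (mul_le_mul hB hmass (abs_nonneg _) hB0) (by linarith)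
    _ = e + (e + 2 * B + 1) * τ := by ring

end Estimates

lemma exists_pos_forall_abs_sub_le {g : ℝ → ℝ} (hg : Continuous g) (a b : ℝ) {e : ℝ}
    (he : 0 < e) :
    ∃ r > 0, r ≤ 1 ∧ ∀ t ∈ Set.Icc a b, ∀ x, |x - t| ≤ r → |g x - g t| ≤ e := by
  obtain ⟨δ, hδ, hδg⟩ := Metric.uniformContinuousOn_iff_le.1
    ((isCompact_Icc (a := a - 1) (b := b + 1)).uniformContinuousOn_of_continuous
      hg.continuousOn) e he
  refine ⟨min δ 1, lt_min hδ one_pos, min_le_right _ _, fun t ht x hx => ?_⟩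
  obtain ⟨hx₁, hx₂⟩ := abs_le.1 (hx.trans (min_le_right _ _))
  have h := hδg x ⟨by linarith [ht.1], by linarith [ht.2]⟩ t
    ⟨by linarith [ht.1], by linarith [ht.2]⟩
    (by rw [Real.dist_eq]; exact hx.trans (min_le_left _ _))
  rwa [Real.dist_eq] at h

lemma tendsto_gridError {C r : ℝ} (hr : 0 < r) :
    Tendsto (fun n : ℕ => gridError (n ^ 4) (C / n ^ 4) n r) atTop (𝓝 0) := by
  have hpoly (k : ℕ) :
      Tendsto (fun n : ℕ => (n : ℝ) ^ k * exp (-(n * (r / 2)))) atTop (𝓝 0) := by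
    have h := (tendsto_rpow_mul_exp_neg_mul_atTop_nhds_zero k (r / 2) (by positivity)).comp
      tendsto_natCast_atTop_atTop
    refine h.congr fun n => ?_
    simp [Real.rpow_natCast, mul_comm]
  have hinv : Tendsto (fun n : ℕ => C ^ 2 * (1 / (n : ℝ)) ^ 2) atTop (𝓝 0) := by
    simpa using (tendsto_one_div_atTop_nhds_zero_nat.pow 2).const_mul (C ^ 2)
  have hsum := hinv.add ((hpoly 5).add ((hpoly 1).const_mul 2))
  rw [mul_zero, add_zero, add_zero] at hsum
  refine hsum.congr' ((eventually_ne_atTop 0).mono fun n hn => ?_)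
  simp only [gridError]
  field_simp
  push_cast
  ring

lemma exists_nat_gridError_lt {C r K δ : ℝ} (hr : 0 < r) (hδ : 0 < δ) :
    ∃ n : ℕ, 1 ≤ n ∧ C / n ^ 4 ≤ r / 2 ∧ gridError (n ^ 4) (C / n ^ 4) n r ≤ 1 ∧
      K * gridError (n ^ 4) (C / n ^ 4) n r < δ := by
  have hτ := tendsto_gridError (C := C) hr
  have hKτ := hτ.const_mul K
  rw [mul_zero] at hKτ
  have hΔ : Tendsto (fun n : ℕ => C / (n : ℝ) ^ 4) atTop (𝓝 0) := by
    simpa [div_eq_mul_inv] using (tendsto_one_div_atTop_nhds_zero_nat.pow 4).const_mul C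
  exact ((eventually_ge_atTop 1).and ((hΔ.eventually (eventually_le_nhds (half_pos hr))).and
    ((hτ.eventually (eventually_le_nhds one_pos)).and
      (hKτ.eventually (eventually_lt_nhds hδ))))).exists

theorem exists_sigmoidStaircase_close {f : ℝ → ℝ} (hf1 : ContDiff ℝ 1 f)
    (hf01 : ∀ x, f x ∈ Set.Icc 0 1) {s0 s1 : ℝ} (hs : s0 ≤ s1) {ε : ℝ} (hε : 0 < ε) :
    ∃ n : ℕ, 1 ≤ n ∧ ∀ t ∈ Set.Icc s0 s1,
      |f t - sigmoidStaircase f (s0 - 2) ((s1 - s0 + 4) / n ^ 4) (n ^ 4) n t| < ε ∧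
      |deriv f t - deriv (sigmoidStaircase f (s0 - 2) ((s1 - s0 + 4) / n ^ 4) (n ^ 4) n) t|
        < ε := by
  have hf' : Continuous (deriv f) := hf1.continuous_deriv le_rfl
  obtain ⟨r₀, hr₀, hr₀1, hmod₀⟩ := exists_pos_forall_abs_sub_le hf1.continuous s0 s1
    (by positivity : 0 < ε / 4)
  obtain ⟨r₁, hr₁, -, hmod₁⟩ := exists_pos_forall_abs_sub_le hf' s0 s1 (by positivity : 0 < ε / 4)
  obtain ⟨B, hB⟩ := isCompact_Icc.exists_bound_of_continuousOn hf'.continuousOn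
  set r := min r₀ r₁
  obtain ⟨n, hn1, hΔr, hτ1, hτε⟩ := exists_nat_gridError_lt (C := s1 - s0 + 4)
    (K := 2 * B + 1) (lt_min hr₀ hr₁) (half_pos hε)
  set Δ := (s1 - s0 + 4) / (n : ℝ) ^ 4 with hΔ
  have hn : (1 : ℝ) ≤ n := by exact_mod_cast hn1
  have hΔ0 : 0 < Δ := div_pos (by linarith) (by positivity)
  have hNΔ : ((n ^ 4 : ℕ) : ℝ) * Δ = s1 - s0 + 4 := by
    rw [hΔ]
    push_cast
    field_simp
  have hτ0 : 0 ≤ gridError (n ^ 4) Δ n r := by rw [gridError]; positivity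
  have hετ : ε / 4 * gridError (n ^ 4) Δ n r ≤ ε / 4 := mul_le_of_le_one_right (by positivity) hτ1
  refine ⟨n, hn1, fun t ht => ?_⟩
  rw [(hasDerivAt_sigmoidStaircase n t).deriv]
  have hLt : s0 - 2 + r < t := by linarith [ht.1, min_le_left r₀ r₁]
  have htR : t + r < s0 - 2 + ((n ^ 4 : ℕ) : ℝ) * Δ := by linarith [ht.2, min_le_left r₀ r₁]
  have hBt : |deriv f t| ≤ B := by simpa using hB t ht
  have hτB : gridError (n ^ 4) Δ n r ≤ (2 * B + 1) * gridError (n ^ 4) Δ n r :=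
    le_mul_of_one_le_left hτ0 (by linarith [abs_nonneg (deriv f t)])
  have h0 := abs_sub_sigmoidStaircase_le hf01 hn hΔ0 hΔr hLt htR (by positivity)
    fun x hx => hmod₀ t ht x (hx.trans (min_le_left _ _))
  have h1 := abs_deriv_sub_deriv_sigmoidStaircase_le (hf1.differentiable one_ne_zero) hf01 hn
    hΔ0 hΔr (by linarith [min_le_left r₀ r₁]) hLt htR (by positivity) hBt
    fun x hx => hmod₁ t ht x (hx.trans (min_le_right _ _))
  constructor <;> linarith

theorem stmt_12_general (f : ℝ → ℝ) (hf : StrictMono f) (hf1 : ContDiff ℝ 1 f)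
    (hrange : ∀ t, f t ∈ Set.Ioo (0 : ℝ) 1)
    (s0 s1 : ℝ) (hs : s0 ≤ s1) (ε : ℝ) (hε : 0 < ε) :
    ∃ (M : ℕ) (w a b : Fin M → ℝ),
      (∀ i, 0 < w i) ∧ (∑ i, w i = 1) ∧ (∀ i, 0 < a i) ∧
      ∀ t ∈ Set.Icc s0 s1,
        |f t - ∑ i, w i * (1 + Real.exp (-(a i * t + b i)))⁻¹| < ε ∧
        |deriv f t -
          deriv (fun u : ℝ => ∑ i, w i * (1 + Real.exp (-(a i * u + b i)))⁻¹) t| < ε := by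
  obtain ⟨n, hn1, happrox⟩ := exists_sigmoidStaircase_close hf1
    (fun x => Set.Ioo_subset_Icc_self (hrange x)) hs hε
  set Δ := (s1 - s0 + 4) / (n : ℝ) ^ 4
  have hΔ0 : 0 < Δ := div_pos (by linarith) (by positivity)
  refine ⟨n ^ 4, fun i => gridWeight f (s0 - 2) Δ (n ^ 4) i, fun _ => n,
    fun i => -(n * (s0 - 2 + (i : ℕ) * Δ)), fun i => gridWeight_pos hf hrange hΔ0 i.2, ?_,
    fun _ => by positivity, fun t ht => ?_⟩
  · rw [Fin.sum_univ_eq_sum_range (fun i => gridWeight f (s0 - 2) Δ (n ^ 4) i)]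
    exact sum_gridWeight (by positivity)
  simpa only [← sigmoidStaircase_eq_sum_fin] using happrox t ht

/-- Density of convex combinations of sigmoids in C¹ on compact intervals. -/
theorem stmt_12 (f : ℝ → ℝ) (hf : StrictMono f) (hf1 : ContDiff ℝ 1 f)
    (hrange : ∀ t, f t ∈ Set.Ioo (0 : ℝ) 1)
    (hbot : Tendsto f atBot (nhds 0)) (htop : Tendsto f atTop (nhds 1))
    (s0 s1 : ℝ) (hs : s0 ≤ s1) (ε : ℝ) (hε : 0 < ε) :
    ∃ (M : ℕ) (w a b : Fin M → ℝ),
      (∀ i, 0 < w i) ∧ (∑ i, w i = 1) ∧ (∀ i, 0 < a i) ∧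
      ∀ t ∈ Set.Icc s0 s1,
        |f t - ∑ i, w i * (1 + Real.exp (-(a i * t + b i)))⁻¹| < ε ∧
        |deriv f t -
          deriv (fun u : ℝ => ∑ i, w i * (1 + Real.exp (-(a i * u + b i)))⁻¹) t| < ε :=
  stmt_12_general f hf hf1 hrange s0 s1 hs ε hε
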